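/- Let H ⊂ ℝᴺ be an open affine half space with reflection Q at ∂H (write x̄ = Q(x)). Let J be an even nonnegative kernel with J(x̄−ȳ) = J(x−y) for all x,y and J(x−y) ≥ J(x−ȳ) ≥ 0 for all x,y ∈ H. Let U′ be open with Q(U′) = U′ and let v ∈ L²(ℝᴺ) be antisymmetric (v∘Q = −v) with ρ(v,U′) < ∞. Then ρ(1_H·v, U′) ≤ ρ(v, U′), where ρ(w,U′) = ∬_{U′×U′} (w(x)−w(y))² J(x−y) dx dy. -/

import Mathlib

/-!
The reflection `Q` preserves Lebesgue measure on `U′`, so replacing the integrand of `ρ` by its sum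
over the four points `(x, y), (Q x, y), (x, Q y), (Q x, Q y)` multiplies `ρ` by exactly `4`; it
therefore suffices to compare these four-term sums pointwise. They are invariant under `x ↦ Q x`
and `y ↦ Q y`, so we may assume `Q x, Q y ∉ H`. Then, with `s = (1_H v)(x) = v(x)`,
`t = (1_H v)(y) = v(y)`, `α = J(x - y)` and `β = J(x - Q y) = J(Q x - y)`, the comparison reads
`(s - t)² α + (s² + t²) β ≤ 2 (s - t)² α + 2 (s + t)² β`, which follows from `β ≤ α` and
`(s - t)² + (s + t)² ≥ s² + t²` when `x, y ∈ H`, and is trivial otherwise, since then `s = 0` or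
`t = 0`. A general `v ∈ L²` is first replaced by the a.e. equal, measurable and everywhere
antisymmetric function `(v₀ - v₀ ∘ Q) / 2`, `v₀` a measurable representative of `v`.
-/

open MeasureTheory ENNReal Set
open scoped RealInnerProductSpace

/-- The localized energy `ρ(w,U′)`. -/
noncomputable def rho (N : ℕ) (J : EuclideanSpace ℝ (Fin N) → ℝ)
    (U' : Set (EuclideanSpace ℝ (Fin N)))
    (w : EuclideanSpace ℝ (Fin N) → ℝ) : ℝ≥0∞ :=
  ∫⁻ x in U', ∫⁻ y in U', ENNReal.ofReal ((w x - w y) ^ 2 * J (x - y))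

open Function

section HyperplaneReflection

variable {E : Type*} [NormedAddCommGroup E] [InnerProductSpace ℝ E] {w₀ : E} {a : ℝ}

def hyperplaneReflection (w₀ : E) (a : ℝ) (x : E) : E := x + (2 * (a - ⟪x, w₀⟫)) • w₀

lemma inner_hyperplaneReflection (hw₀ : ‖w₀‖ = 1) (x : E) :
    ⟪hyperplaneReflection w₀ a x, w₀⟫ = 2 * a - ⟪x, w₀⟫ := by
  rw [hyperplaneReflection, inner_add_left, real_inner_smul_left,
    real_inner_self_eq_norm_mul_norm, hw₀]
  ring

lemma involutive_hyperplaneReflection (hw₀ : ‖w₀‖ = 1) :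
    Involutive (hyperplaneReflection w₀ a) := fun x => by
  rw [hyperplaneReflection, inner_hyperplaneReflection hw₀, hyperplaneReflection]
  module

lemma not_lt_inner_hyperplaneReflection (hw₀ : ‖w₀‖ = 1) {x : E} (hx : a < ⟪x, w₀⟫) :
    ¬ a < ⟪hyperplaneReflection w₀ a x, w₀⟫ := by
  rw [inner_hyperplaneReflection hw₀]
  linarith

lemma hyperplaneReflection_eq_self (hw₀ : ‖w₀‖ = 1) {x : E} (hx : ¬ a < ⟪x, w₀⟫)
    (hQx : ¬ a < ⟪hyperplaneReflection w₀ a x, w₀⟫) : hyperplaneReflection w₀ a x = x := by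
  rw [inner_hyperplaneReflection hw₀] at hQx
  simp [hyperplaneReflection, show ⟪x, w₀⟫ = a by linarith]

lemma measurePreserving_hyperplaneReflection [FiniteDimensional ℝ E] [MeasurableSpace E]
    [BorelSpace E] (hw₀ : ‖w₀‖ = 1) :
    MeasurePreserving (hyperplaneReflection w₀ a) := by
  have : hyperplaneReflection w₀ a =
      (· + (2 * a) • w₀) ∘ ((ℝ ∙ w₀).reflection.trans (LinearIsometryEquiv.neg ℝ)) := by
    ext x : 1
    simp only [comp_apply, LinearIsometryEquiv.trans_apply, LinearIsometryEquiv.coe_neg,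
      Submodule.reflection_apply, Submodule.starProjection_unit_singleton ℝ hw₀,
      hyperplaneReflection, real_inner_comm]
    module
  rw [this]
  exact (measurePreserving_add_right volume _).comp (LinearIsometryEquiv.measurePreserving _)

end HyperplaneReflection

section ReflectionSum

variable {α M : Type*} {Q : α → α}

def reflSum [Add M] (Q : α → α) (f : α × α → M) (z : α × α) : M :=
  f z + f (Q z.1, z.2) + f (z.1, Q z.2) + f (Q z.1, Q z.2)

lemma reflSum_apply_fst [AddCommMonoid M] (hQ : Involutive Q) (f : α × α → M) (x y : α) :
    reflSum Q f (Q x, y) = reflSum Q f (x, y) := by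
  simp only [reflSum, hQ x]
  abel

lemma reflSum_apply_snd [AddCommMonoid M] (hQ : Involutive Q) (f : α × α → M) (x y : α) :
    reflSum Q f (x, Q y) = reflSum Q f (x, y) := by
  simp only [reflSum, hQ y]
  abel

lemma reflSum_ofReal {f : α × α → ℝ} (hf : ∀ z, 0 ≤ f z) (z : α × α) :
    reflSum Q (fun z => ENNReal.ofReal (f z)) z = ENNReal.ofReal (reflSum Q f z) := by
  have := hf z; have := hf (Q z.1, z.2); have := hf (z.1, Q z.2); have := hf (Q z.1, Q z.2)
  simp only [reflSum]
  rw [ENNReal.ofReal_add, ENNReal.ofReal_add, ENNReal.ofReal_add] <;> positivity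

variable [MeasurableSpace α] {μ : Measure α}

lemma MeasureTheory.MeasurePreserving.lintegral_add_comp {T : α → α} (hT : MeasurePreserving T μ μ)
    {f : α → ℝ≥0∞} (hf : Measurable f) :
    ∫⁻ x, (f x + f (T x)) ∂μ = 2 * ∫⁻ x, f x ∂μ := by
  rw [lintegral_add_left hf, hT.lintegral_comp hf, two_mul]

lemma lintegral_reflSum [SFinite μ] (hQ : MeasurePreserving Q μ μ) {f : α × α → ℝ≥0∞}
    (hf : Measurable f) :
    ∫⁻ z, reflSum Q f z ∂μ.prod μ = 4 * ∫⁻ z, f z ∂μ.prod μ := by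
  have hQ₁ := hQ.prod (MeasurePreserving.id μ)
  have hQ₂ := (MeasurePreserving.id μ).prod hQ
  set g : α × α → ℝ≥0∞ := fun z => f z + f (Prod.map Q id z)
  have hg : Measurable g := hf.add (hf.comp hQ₁.measurable)
  calc ∫⁻ z, reflSum Q f z ∂μ.prod μ = ∫⁻ z, (g z + g (Prod.map id Q z)) ∂μ.prod μ := by
        simp only [reflSum, g, Prod.map, id, add_assoc]
    _ = 4 * ∫⁻ z, f z ∂μ.prod μ := by
        rw [hQ₂.lintegral_add_comp hg, hQ₁.lintegral_add_comp hf, ← mul_assoc]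
        norm_num

end ReflectionSum

section Energy

variable {α : Type*} {Q : α → α} {H : Set α} {k : α → α → ℝ} {v w : α → ℝ}

def energyDensity (k : α → α → ℝ) (w : α → ℝ) (z : α × α) : ℝ :=
  (w z.1 - w z.2) ^ 2 * k z.1 z.2

lemma indicator_apply_eq_self_of_apply_notMem (hfix : ∀ x, x ∉ H → Q x ∉ H → Q x = x)
    (hvQ : ∀ x, v (Q x) = -v x) {x : α} (hx : Q x ∉ H) : H.indicator v x = v x := by
  by_cases h : x ∈ H
  · exact indicator_of_mem h v
  · have := hvQ x
    rw [hfix x h hx] at this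
    rw [indicator_of_notMem h]
    linarith

lemma sq_mul_add_sq_mul_le {s t α β : ℝ} (hα : 0 ≤ α) (hβ : 0 ≤ β) (h : β ≤ α ∨ s = 0 ∨ t = 0) :
    t ^ 2 * β + s ^ 2 * β ≤ 2 * (s + t) ^ 2 * β + (s - t) ^ 2 * α := by
  rcases h with hβα | rfl | rfl
  · nlinarith [mul_le_mul_of_nonneg_left hβα (sq_nonneg (s - t)), mul_nonneg hβ (sq_nonneg (s + t))]
  · nlinarith [mul_nonneg hα (sq_nonneg t), mul_nonneg hβ (sq_nonneg t)]
  · nlinarith [mul_nonneg hα (sq_nonneg s), mul_nonneg hβ (sq_nonneg s)]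

lemma reflSum_energyDensity_indicator_le_of_apply_notMem (hQ : Involutive Q)
    (hfix : ∀ x, x ∉ H → Q x ∉ H → Q x = x)
    (hk0 : ∀ x y, 0 ≤ k x y) (hkQ : ∀ x y, k (Q x) (Q y) = k x y)
    (hkH : ∀ x ∈ H, ∀ y ∈ H, k x (Q y) ≤ k x y) (hvQ : ∀ x, v (Q x) = -v x)
    {x y : α} (hx : Q x ∉ H) (hy : Q y ∉ H) :
    reflSum Q (energyDensity k (H.indicator v)) (x, y) ≤ reflSum Q (energyDensity k v) (x, y) := by
  have hk : k (Q x) y = k x (Q y) := by simpa only [hQ y] using hkQ x (Q y)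
  simp only [reflSum, energyDensity, hvQ, hkQ, hk, indicator_of_notMem hx, indicator_of_notMem hy,
    ← indicator_apply_eq_self_of_apply_notMem hfix hvQ hx,
    ← indicator_apply_eq_self_of_apply_notMem hfix hvQ hy]
  have hcase : k x (Q y) ≤ k x y ∨ H.indicator v x = 0 ∨ H.indicator v y = 0 := by
    by_cases hxH : x ∈ H
    · by_cases hyH : y ∈ H
      · exact Or.inl (hkH x hxH y hyH)
      · exact Or.inr (Or.inr (indicator_of_notMem hyH v))
    · exact Or.inr (Or.inl (indicator_of_notMem hxH v))
  linear_combination sq_mul_add_sq_mul_le (hk0 x y) (hk0 x (Q y)) hcase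

lemma exists_apply_notMem_of_involutive (hQ : Involutive Q) (hHQ : ∀ x ∈ H, Q x ∉ H) (x : α) :
    ∃ x', Q x' ∉ H ∧ (x' = x ∨ x' = Q x) := by
  by_cases hx : Q x ∈ H
  · exact ⟨Q x, by simpa only [hQ x] using hHQ _ hx, Or.inr rfl⟩
  · exact ⟨x, hx, Or.inl rfl⟩

lemma reflSum_energyDensity_indicator_le (hQ : Involutive Q) (hHQ : ∀ x ∈ H, Q x ∉ H)
    (hfix : ∀ x, x ∉ H → Q x ∉ H → Q x = x)
    (hk0 : ∀ x y, 0 ≤ k x y) (hkQ : ∀ x y, k (Q x) (Q y) = k x y)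
    (hkH : ∀ x ∈ H, ∀ y ∈ H, k x (Q y) ≤ k x y) (hvQ : ∀ x, v (Q x) = -v x) (z : α × α) :
    reflSum Q (energyDensity k (H.indicator v)) z ≤ reflSum Q (energyDensity k v) z := by
  obtain ⟨x, hx, hxz⟩ := exists_apply_notMem_of_involutive hQ hHQ z.1
  obtain ⟨y, hy, hyz⟩ := exists_apply_notMem_of_involutive hQ hHQ z.2
  have hz : ∀ f : α × α → ℝ, reflSum Q f (x, y) = reflSum Q f z := fun f => by
    rcases hxz with rfl | rfl <;> rcases hyz with rfl | rfl <;>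
      simp only [reflSum_apply_fst hQ, reflSum_apply_snd hQ]
  rw [← hz, ← hz]
  exact reflSum_energyDensity_indicator_le_of_apply_notMem hQ hfix hk0 hkQ hkH hvQ hx hy

variable [MeasurableSpace α] {μ : Measure α}

/-- `rho N J U'` is `energy (volume.restrict U') (fun x y ↦ J (x - y))` by definition. -/
noncomputable def energy (μ : Measure α) (k : α → α → ℝ) (w : α → ℝ) : ℝ≥0∞ :=
  ∫⁻ x, ∫⁻ y, ENNReal.ofReal (energyDensity k w (x, y)) ∂μ ∂μ

lemma energy_congr_ae (h : v =ᵐ[μ] w) : energy μ k v = energy μ k w := by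
  refine lintegral_congr_ae ?_
  filter_upwards [h] with x hx
  refine lintegral_congr_ae ?_
  filter_upwards [h] with y hy
  simp only [energyDensity, hx, hy]

lemma measurable_energyDensity (hk : Measurable (uncurry k)) (hw : Measurable w) :
    Measurable (energyDensity k w) :=
  ((hw.comp measurable_fst).sub (hw.comp measurable_snd)).pow_const 2 |>.mul hk

lemma energy_eq_lintegral_prod [SFinite μ] (hk : Measurable (uncurry k)) (hw : Measurable w) :
    energy μ k w = ∫⁻ z, ENNReal.ofReal (energyDensity k w z) ∂μ.prod μ :=
  lintegral_lintegral (measurable_energyDensity hk hw).ennreal_ofReal.aemeasurable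

theorem energy_indicator_le_of_measurable [SFinite μ] (hQ : Involutive Q)
    (hQμ : MeasurePreserving Q μ μ) (hH : MeasurableSet H) (hHQ : ∀ x ∈ H, Q x ∉ H)
    (hfix : ∀ x, x ∉ H → Q x ∉ H → Q x = x) (hk : Measurable (uncurry k))
    (hk0 : ∀ x y, 0 ≤ k x y) (hkQ : ∀ x y, k (Q x) (Q y) = k x y)
    (hkH : ∀ x ∈ H, ∀ y ∈ H, k x (Q y) ≤ k x y) (hv : Measurable v)
    (hvQ : ∀ x, v (Q x) = -v x) :
    energy μ k (H.indicator v) ≤ energy μ k v := by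
  have hdensity : ∀ w z, 0 ≤ energyDensity k w z := fun _ _ => mul_nonneg (sq_nonneg _) (hk0 _ _)
  suffices 4 * energy μ k (H.indicator v) ≤ 4 * energy μ k v from
    (ENNReal.mul_le_mul_iff_right (by norm_num) (by norm_num)).1 this
  rw [energy_eq_lintegral_prod hk hv, energy_eq_lintegral_prod hk (hv.indicator hH),
    ← lintegral_reflSum hQμ (measurable_energyDensity hk hv).ennreal_ofReal,
    ← lintegral_reflSum hQμ (measurable_energyDensity hk (hv.indicator hH)).ennreal_ofReal]
  refine lintegral_mono fun z => ?_
  rw [reflSum_ofReal (hdensity _), reflSum_ofReal (hdensity _)]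
  exact ENNReal.ofReal_le_ofReal (reflSum_energyDensity_indicator_le hQ hHQ hfix hk0 hkQ hkH hvQ z)

lemma exists_measurable_antisymm_ae_eq (hQ : Involutive Q) (hQμ : MeasurePreserving Q μ μ)
    (hv : AEMeasurable v μ) (hvQ : ∀ᵐ x ∂μ, v (Q x) = -v x) :
    ∃ u : α → ℝ, Measurable u ∧ (∀ x, u (Q x) = -u x) ∧ u =ᵐ[μ] v := by
  refine ⟨fun x => (hv.mk v x - hv.mk v (Q x)) / 2,
    (hv.measurable_mk.sub (hv.measurable_mk.comp hQμ.measurable)).div_const 2,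
    fun x => by simp only [hQ x]; ring, ?_⟩
  filter_upwards [hv.ae_eq_mk, hQμ.quasiMeasurePreserving.ae_eq hv.ae_eq_mk, hvQ] with x h h' hx
  simp only [comp_apply] at h'
  rw [← h, ← h', hx]
  ring

theorem energy_indicator_le [SFinite μ] (hQ : Involutive Q)
    (hQμ : MeasurePreserving Q μ μ) (hH : MeasurableSet H) (hHQ : ∀ x ∈ H, Q x ∉ H)
    (hfix : ∀ x, x ∉ H → Q x ∉ H → Q x = x) (hk : Measurable (uncurry k))
    (hk0 : ∀ x y, 0 ≤ k x y) (hkQ : ∀ x y, k (Q x) (Q y) = k x y)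
    (hkH : ∀ x ∈ H, ∀ y ∈ H, k x (Q y) ≤ k x y) (hv : AEMeasurable v μ)
    (hvQ : ∀ᵐ x ∂μ, v (Q x) = -v x) :
    energy μ k (H.indicator v) ≤ energy μ k v := by
  obtain ⟨u, hu, huQ, huv⟩ := exists_measurable_antisymm_ae_eq hQ hQμ hv hvQ
  calc energy μ k (H.indicator v) = energy μ k (H.indicator u) :=
        energy_congr_ae huv.symm.indicator
    _ ≤ energy μ k u :=
        energy_indicator_le_of_measurable hQ hQμ hH hHQ hfix hk hk0 hkQ hkH hu huQ
    _ = energy μ k v := energy_congr_ae huv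

end Energy

theorem rho_indicator_le_general
    (N : ℕ)
    (w₀ : EuclideanSpace ℝ (Fin N)) (a : ℝ) (hw₀ : ‖w₀‖ = 1)
    (H : Set (EuclideanSpace ℝ (Fin N)))
    (hH : H = {x | a < ⟪x, w₀⟫})
    (Q : EuclideanSpace ℝ (Fin N) → EuclideanSpace ℝ (Fin N))
    (hQ : ∀ x, Q x = x + (2 * (a - ⟪x, w₀⟫)) • w₀)
    (J : EuclideanSpace ℝ (Fin N) → ℝ)
    (hJmeas : Measurable J) (hJnonneg : ∀ z, 0 ≤ J z)
    (hJQ : ∀ x y, J (Q x - Q y) = J (x - y))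
    (hJmono : ∀ x ∈ H, ∀ y ∈ H, J (x - Q y) ≤ J (x - y))
    (U' : Set (EuclideanSpace ℝ (Fin N)))
    (hU'sym : Q '' U' = U')
    (v : EuclideanSpace ℝ (Fin N) → ℝ)
    (hvL2 : MemLp v 2 volume)
    (hvanti : ∀ x, v (Q x) = -v x) :
    rho N J U' (H.indicator v) ≤ rho N J U' v := by
  obtain rfl : Q = hyperplaneReflection w₀ a := funext hQ
  subst hH
  have hinv : Involutive (hyperplaneReflection w₀ a) := involutive_hyperplaneReflection hw₀
  have hQvol := measurePreserving_hyperplaneReflection (a := a) hw₀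
  have hQμ : MeasurePreserving (hyperplaneReflection w₀ a) (volume.restrict U')
      (volume.restrict U') := by
    simpa only [← hinv.image_eq_preimage_symm, hU'sym] using hQvol.restrict_preimage_emb
      (MeasurableEquiv.ofInvolutive _ hinv hQvol.measurable).measurableEmbedding U'
  exact energy_indicator_le (k := fun x y => J (x - y)) hinv hQμ
    (measurableSet_lt measurable_const (continuous_id.inner continuous_const).measurable)
    (fun _ => not_lt_inner_hyperplaneReflection hw₀) (fun _ => hyperplaneReflection_eq_self hw₀)
    (hJmeas.comp (measurable_fst.sub measurable_snd)) (fun _ _ => hJnonneg _) hJQ hJmono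
    hvL2.aestronglyMeasurable.aemeasurable.restrict (ae_of_all _ hvanti)

/-- For an antisymmetric function `v`, the energy of `1_H · v` is dominated by the
energy of `v` on a reflection-symmetric set `U′`. -/
theorem rho_indicator_le
    (N : ℕ)
    (w₀ : EuclideanSpace ℝ (Fin N)) (a : ℝ) (hw₀ : ‖w₀‖ = 1)
    (H : Set (EuclideanSpace ℝ (Fin N)))
    (hH : H = {x | a < ⟪x, w₀⟫})
    (Q : EuclideanSpace ℝ (Fin N) → EuclideanSpace ℝ (Fin N))
    (hQ : ∀ x, Q x = x + (2 * (a - ⟪x, w₀⟫)) • w₀)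
    (J : EuclideanSpace ℝ (Fin N) → ℝ)
    (hJmeas : Measurable J) (hJnonneg : ∀ z, 0 ≤ J z)
    (hJeven : ∀ z, J (-z) = J z)
    (hJQ : ∀ x y, J (Q x - Q y) = J (x - y))
    (hJmono : ∀ x ∈ H, ∀ y ∈ H, J (x - Q y) ≤ J (x - y))
    (U' : Set (EuclideanSpace ℝ (Fin N))) (hU'o : IsOpen U')
    (hU'sym : Q '' U' = U')
    (v : EuclideanSpace ℝ (Fin N) → ℝ)
    (hvL2 : MemLp v 2 volume)
    (hvanti : ∀ x, v (Q x) = -v x)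
    (hρv : rho N J U' v < ⊤) :
    rho N J U' (H.indicator v) ≤ rho N J U' v :=
  rho_indicator_le_general N w₀ a hw₀ H hH Q hQ J hJmeas hJnonneg hJQ hJmono U' hU'sym v hvL2 hvanti
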